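/- Let f : [a,b] → [0,∞) be a monotonically increasing probability density function on [a,b] (so ∫_a^b f(t) dt = 1), and let E(X) = ∫_a^b t·f(t) dt. Then (1/8)·[ f₊((a+b)/2) − f₋((a+b)/2) ]·(b−a)² + (a+b)/2 ≤ E(X) ≤ (1/8)·[ f₋(b) − f₊(a) ]·(b−a)² + (a+b)/2. -/

import Mathlib

/-!
Folding `[a, b]` about its midpoint `m` gives
`E(X) - m · ∫ f = ∫_m^b (x - m) (f x - f (a + b - x)) dx`.
For `m < x < b` monotonicity traps the jump `f x - f (a + b - x)` between
`f₊(m) - f₋(m)` and `f₋(b) - f₊(a)`, and `∫_m^b (x - m) dx = (b - a)² / 8`.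
-/

open MeasureTheory Set intervalIntegral Filter Topology

theorem MonotoneOn.le_of_tendsto_nhdsGT {α β : Type*} [LinearOrder α] [TopologicalSpace α]
    [OrderTopology α] [DenselyOrdered α] [Preorder β] [TopologicalSpace β]
    [ClosedIicTopology β]
    {f : α → β} {s : Set α} (hf : MonotoneOn f s) {x y : α} {L : β}
    (hL : Tendsto f (𝓝[>] x) (𝓝 L)) (hxy : x < y) (hs : Ioc x y ⊆ s) : L ≤ f y := by
  have : (𝓝[>] x).NeBot := nhdsGT_neBot_of_exists_gt ⟨y, hxy⟩
  refine le_of_tendsto hL ?_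
  filter_upwards [Ioo_mem_nhdsGT hxy] with z hz
  exact hf (hs (Ioo_subset_Ioc_self hz)) (hs ⟨hxy, le_rfl⟩) hz.2.le

theorem MonotoneOn.le_of_tendsto_nhdsLT {α β : Type*} [LinearOrder α] [TopologicalSpace α]
    [OrderTopology α] [DenselyOrdered α] [Preorder β] [TopologicalSpace β]
    [ClosedIciTopology β]
    {f : α → β} {s : Set α} (hf : MonotoneOn f s) {x y : α} {L : β}
    (hL : Tendsto f (𝓝[<] x) (𝓝 L)) (hyx : y < x) (hs : Ico y x ⊆ s) : f y ≤ L := by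
  have : (𝓝[<] x).NeBot := nhdsLT_neBot_of_exists_lt ⟨y, hyx⟩
  refine ge_of_tendsto hL ?_
  filter_upwards [Ioo_mem_nhdsLT hyx] with z hz
  exact hf (hs ⟨le_rfl, hyx⟩) (hs (Ioo_subset_Ico_self hz)) hz.1.le

theorem add_div_two_mem_uIcc {α : Type*} [Field α] [LinearOrder α] [IsStrictOrderedRing α]
    (a b : α) : (a + b) / 2 ∈ uIcc a b := by
  rcases le_total a b with h | h
  · exact uIcc_of_le h ▸ ⟨by linarith, by linarith⟩
  · exact uIcc_of_ge h ▸ ⟨by linarith, by linarith⟩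

theorem IntervalIntegrable.comp_reflect {f : ℝ → ℝ} {a b : ℝ}
    (hf : IntervalIntegrable f volume a b) :
    IntervalIntegrable (fun x ↦ f (a + b - x)) volume a b := by
  have hrefl := hf.comp_sub_left (a + b)
  rw [add_sub_cancel_right, add_sub_cancel_left] at hrefl
  exact hrefl.symm

theorem integral_mul_eq_midpoint_mul_add {f : ℝ → ℝ} {a b : ℝ}
    (hf : IntervalIntegrable f volume a b) :
    ∫ t in a..b, t * f t = (a + b) / 2 * (∫ t in a..b, f t) +
      ∫ x in (a + b) / 2..b, (x - (a + b) / 2) * (f x - f (a + b - x)) := by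
  set m := (a + b) / 2 with hm
  have hm_mem : m ∈ uIcc a b := add_div_two_mem_uIcc a b
  have hint_am : IntervalIntegrable (fun t ↦ (t - m) * f t) volume a m :=
    (hf.mono_set (uIcc_subset_uIcc_left hm_mem)).continuousOn_mul (by fun_prop)
  have hint_mb : IntervalIntegrable (fun t ↦ (t - m) * f t) volume m b :=
    (hf.mono_set (uIcc_subset_uIcc_right hm_mem)).continuousOn_mul (by fun_prop)
  have hint_refl : IntervalIntegrable (fun x ↦ (x - m) * f (a + b - x)) volume m b :=
    (hf.comp_reflect.mono_set (uIcc_subset_uIcc_right hm_mem)).continuousOn_mul (by fun_prop)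
  have hleft : ∫ t in a..m, (t - m) * f t = -∫ x in m..b, (x - m) * f (a + b - x) := by
    have hsub := intervalIntegral.integral_comp_sub_left (fun t ↦ (t - m) * f t) (a + b)
      (a := m) (b := b)
    rw [add_sub_cancel_right, show a + b - m = m by rw [hm]; ring] at hsub
    rw [← hsub, ← intervalIntegral.integral_neg]
    congr 1; ext x; rw [hm]; ring
  calc ∫ t in a..b, t * f t = ∫ t in a..b, (m * f t + (t - m) * f t) := by congr 1; ext; ring
    _ = m * (∫ t in a..b, f t) + ∫ t in a..b, (t - m) * f t := by
      rw [intervalIntegral.integral_add (hf.const_mul m) (hint_am.trans hint_mb),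
        intervalIntegral.integral_const_mul]
    _ = m * (∫ t in a..b, f t) +
      ((∫ t in a..m, (t - m) * f t) + ∫ t in m..b, (t - m) * f t) := by
      rw [integral_add_adjacent_intervals hint_am hint_mb]
    _ = _ := by
      rw [hleft, neg_add_eq_sub, ← intervalIntegral.integral_sub hint_mb hint_refl]
      simp only [mul_sub]

theorem integral_sub_mul_const {m b : ℝ} (c : ℝ) :
    ∫ x in m..b, (x - m) * c = c * (b - m) ^ 2 / 2 := by
  rw [intervalIntegral.integral_mul_const, intervalIntegral.integral_comp_sub_right (fun x ↦ x)]
  simp only [sub_self, integral_id]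
  ring

theorem le_integral_sub_mul {g : ℝ → ℝ} {m b c : ℝ} (hmb : m ≤ b)
    (hg : IntervalIntegrable g volume m b) (hc : ∀ x ∈ Ioo m b, c ≤ g x) :
    c * (b - m) ^ 2 / 2 ≤ ∫ x in m..b, (x - m) * g x := by
  rw [← integral_sub_mul_const]
  refine integral_mono_on_of_le_Ioo hmb (Continuous.intervalIntegrable (by fun_prop) _ _)
    (hg.continuousOn_mul (by fun_prop))
    fun x hx ↦ mul_le_mul_of_nonneg_left (hc x hx) (sub_nonneg.2 hx.1.le)

theorem integral_sub_mul_le {g : ℝ → ℝ} {m b c : ℝ} (hmb : m ≤ b)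
    (hg : IntervalIntegrable g volume m b) (hc : ∀ x ∈ Ioo m b, g x ≤ c) :
    ∫ x in m..b, (x - m) * g x ≤ c * (b - m) ^ 2 / 2 := by
  rw [← integral_sub_mul_const]
  refine integral_mono_on_of_le_Ioo hmb (hg.continuousOn_mul (by fun_prop))
    (Continuous.intervalIntegrable (by fun_prop) _ _)
    fun x hx ↦ mul_le_mul_of_nonneg_left (hc x hx) (sub_nonneg.2 hx.1.le)

theorem expectation_midpoint_bounds_monotone_pdf
    (a b : ℝ) (hab : a < b) (f : ℝ → ℝ)
    (hmono : MonotoneOn f (Set.Icc a b))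
    (hpdf : (∫ t in a..b, f t) = 1)
    (fpm fmm fpa fmb : ℝ)
    (hfpm : Filter.Tendsto f (nhdsWithin ((a + b) / 2) (Set.Ioi ((a + b) / 2)))
      (nhds fpm))
    (hfmm : Filter.Tendsto f (nhdsWithin ((a + b) / 2) (Set.Iio ((a + b) / 2)))
      (nhds fmm))
    (hfpa : Filter.Tendsto f (nhdsWithin a (Set.Ioi a)) (nhds fpa))
    (hfmb : Filter.Tendsto f (nhdsWithin b (Set.Iio b)) (nhds fmb)) :
    (1 / 8) * (fpm - fmm) * (b - a) ^ 2 + (a + b) / 2 ≤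
        (∫ t in a..b, t * f t) ∧
      (∫ t in a..b, t * f t) ≤
        (1 / 8) * (fmb - fpa) * (b - a) ^ 2 + (a + b) / 2 := by
  have hf : IntervalIntegrable f volume a b :=
    MonotoneOn.intervalIntegrable (by rwa [uIcc_of_le hab.le])
  rw [integral_mul_eq_midpoint_mul_add hf, hpdf, mul_one]
  set m := (a + b) / 2 with hm
  have ham : a < m := by linarith
  have hmb : m < b := by linarith
  have hg : IntervalIntegrable (fun x ↦ f x - f (a + b - x)) volume m b :=
    (hf.sub hf.comp_reflect).mono_set (uIcc_subset_uIcc_right (add_div_two_mem_uIcc a b))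
  have hsq (c : ℝ) : c * (b - m) ^ 2 / 2 = 1 / 8 * c * (b - a) ^ 2 := by rw [hm]; ring
  have hlower : ∀ x ∈ Ioo m b, fpm - fmm ≤ f x - f (a + b - x) := fun x hx ↦ by
    have h₁ := hmono.le_of_tendsto_nhdsGT hfpm hx.1
      (Ioc_subset_Icc_self.trans (Icc_subset_Icc ham.le hx.2.le))
    have h₂ := hmono.le_of_tendsto_nhdsLT hfmm (y := a + b - x) (by linarith [hx.1])
      (Ico_subset_Icc_self.trans (Icc_subset_Icc (by linarith [hx.2]) hmb.le))
    linarith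
  have hupper : ∀ x ∈ Ioo m b, f x - f (a + b - x) ≤ fmb - fpa := fun x hx ↦ by
    have h₁ := hmono.le_of_tendsto_nhdsLT hfmb hx.2
      (Ico_subset_Icc_self.trans (Icc_subset_Icc (ham.le.trans hx.1.le) le_rfl))
    have h₂ := hmono.le_of_tendsto_nhdsGT hfpa (y := a + b - x) (by linarith [hx.2])
      (Ioc_subset_Icc_self.trans (Icc_subset_Icc le_rfl (by linarith [hx.1])))
    linarith
  exact ⟨by linarith [le_integral_sub_mul hmb.le hg hlower, hsq (fpm - fmm)],
    by linarith [integral_sub_mul_le hmb.le hg hupper, hsq (fmb - fpa)]⟩
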